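/- For all positive reals a, b, c, the function x ↦ θ(a, b, x) has derivative −(a + b + 2·c)·√(a·b) / ((c² + a·b + a·c + b·c)·√c·√(a+b+c)) at the point x = c. (This is the partial derivative formula ∂_c c_b^a computed in the proof of Lemma 2.2 of the paper: varying the central radius only.) -/

import Mathlib

/-- The tangency angle at the center of a sphere of radius `c` subtended by the
centers of spheres of radii `a` and `b`, all three pairwise tangent. -/
noncomputable def theta (a b c : ℝ) : ℝ :=
  Real.arccos (((c + a) ^ 2 + (c + b) ^ 2 - (a + b) ^ 2) / (2 * (c + a) * (c + b)))

/-!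
By the law of cosines, `cos θ(a,b,c) = 1 - 2ab / ((c+a)(c+b))`, so
`sin² θ = 4abc(a+b+c) / ((c+a)(c+b))²`, which is positive for positive radii; hence `arccos` is
differentiable there and the chain rule `θ' = -(cos θ)' / sin θ` gives the formula.
-/

open Real

noncomputable def tangencyCos (a b c : ℝ) : ℝ :=
  ((c + a) ^ 2 + (c + b) ^ 2 - (a + b) ^ 2) / (2 * (c + a) * (c + b))

section

variable {a b c : ℝ}

theorem tangencyCos_eq (hca : c + a ≠ 0) (hcb : c + b ≠ 0) :
    tangencyCos a b c = 1 - 2 * a * b / ((c + a) * (c + b)) := by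
  unfold tangencyCos
  field_simp
  ring

theorem one_sub_tangencyCos_sq (hca : c + a ≠ 0) (hcb : c + b ≠ 0) :
    1 - tangencyCos a b c ^ 2 = 4 * (a * b) * c * (a + b + c) / ((c + a) * (c + b)) ^ 2 := by
  rw [tangencyCos_eq hca hcb]
  field_simp
  ring

theorem sqrt_one_sub_tangencyCos_sq (ha : 0 < a) (hb : 0 < b) (hc : 0 < c) :
    √(1 - tangencyCos a b c ^ 2) = 2 * √(a * b) * √c * √(a + b + c) / ((c + a) * (c + b)) := by
  have hca : 0 < c + a := by linarith
  have hcb : 0 < c + b := by linarith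
  rw [one_sub_tangencyCos_sq hca.ne' hcb.ne', sqrt_div' _ (by positivity),
    sqrt_sq (by positivity), show 4 * (a * b) * c * (a + b + c) = 2 ^ 2 * (a * b) * c * (a + b + c)
      by norm_num, sqrt_mul' _ (by positivity), sqrt_mul' _ hc.le,
    sqrt_mul' _ (by positivity), sqrt_sq zero_le_two]

theorem tangencyCos_ne_neg_one_and_ne_one (ha : 0 < a) (hb : 0 < b) (hc : 0 < c) :
    tangencyCos a b c ≠ -1 ∧ tangencyCos a b c ≠ 1 := by
  have hca : 0 < c + a := by linarith
  have hcb : 0 < c + b := by linarith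
  have hsq : 0 < 1 - tangencyCos a b c ^ 2 := by
    rw [one_sub_tangencyCos_sq hca.ne' hcb.ne']
    positivity
  constructor <;> rintro h <;> rw [h] at hsq <;> norm_num at hsq

theorem hasDerivAt_tangencyCos (hca : c + a ≠ 0) (hcb : c + b ≠ 0) :
    HasDerivAt (fun x => tangencyCos a b x)
      (2 * (a * b) * (a + b + 2 * c) / ((c + a) * (c + b)) ^ 2) c := by
  have hnum := ((((hasDerivAt_id' c).add_const a).fun_pow 2).fun_add
    (((hasDerivAt_id' c).add_const b).fun_pow 2)).sub_const ((a + b) ^ 2)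
  have hden := (((hasDerivAt_id' c).add_const a).const_mul 2).fun_mul
    ((hasDerivAt_id' c).add_const b)
  refine (hnum.div hden (by positivity)).congr_deriv ?_
  field_simp
  ring

end

theorem hasDerivAt_theta_center (a b c : ℝ) (ha : 0 < a) (hb : 0 < b) (hc : 0 < c) :
    HasDerivAt (fun x => theta a b x)
      (-((a + b + 2 * c) * Real.sqrt (a * b)) /
        ((c ^ 2 + a * b + a * c + b * c) * Real.sqrt c * Real.sqrt (a + b + c))) c := by
  have hca : 0 < c + a := by linarith
  have hcb : 0 < c + b := by linarith
  obtain ⟨hne_neg_one, hne_one⟩ := tangencyCos_ne_neg_one_and_ne_one ha hb hc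
  have h := (hasDerivAt_arccos hne_neg_one hne_one).comp c
    (hasDerivAt_tangencyCos hca.ne' hcb.ne')
  -- `theta a b` and `arccos ∘ tangencyCos a b` agree definitionally
  refine h.congr_deriv ?_
  rw [sqrt_one_sub_tangencyCos_sq ha hb hc,
    show c ^ 2 + a * b + a * c + b * c = (c + a) * (c + b) by ring]
  field_simp
  rw [sq_sqrt (by positivity)]
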